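/- Let G be a finite simple graph, r a positive integer, and S_1, S_2 multisets of vertices such that G ⋆^r S_1 and G ⋆^r S_2 are both valid and the multiset S_1 ⊔ S_2 (pointwise sum of multiplicities) is independent in G. Then S_1 ⊔ S_2 is r-incident in G, S_2 is r-incident in G ⋆^r S_1, and G ⋆^r (S_1 ⊔ S_2) = (G ⋆^r S_1) ⋆^r S_2. -/

import Mathlib

open Classical Real Matrix

noncomputable section

variable {V : Type} [Fintype V] [DecidableEq V]

/-- The number of edges of `G` with both endpoints in `A`. -/
def edgeCount (G : SimpleGraph V) (A : Finset V) : ℕ :=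
  (Finset.univ.filter (fun p : V × V => G.Adj p.1 p.2 ∧ p.1 ∈ A ∧ p.2 ∈ A)).card / 2

/-- The graph state `|G⟩`, as a vector in `ℂ^(V → {0,1})`. -/
def graphState (G : SimpleGraph V) : (V → Bool) → ℂ :=
  fun x => (-1 : ℂ) ^ edgeCount G (Finset.univ.filter (fun v => x v = true)) /
    (Real.sqrt (2 ^ Fintype.card V) : ℂ)

/-- The odd neighbourhood `Odd_G(D)` of a set `D` of vertices. -/
def oddNbhd (G : SimpleGraph V) (D : Finset V) : Finset V :=
  Finset.univ.filter (fun v => Odd ((D.filter (fun u => G.Adj v u)).card))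

/-- The operator `X_A` flipping the coordinates in `A`. -/
def Xop (A : Finset V) (ψ : (V → Bool) → ℂ) : (V → Bool) → ℂ :=
  fun x => ψ (fun v => if v ∈ A then !(x v) else x v)

/-- The operator `Z_A`. -/
def Zop (A : Finset V) (ψ : (V → Bool) → ℂ) : (V → Bool) → ℂ :=
  fun x => (-1 : ℂ) ^ ((A.filter (fun v => x v = true)).card) * ψ x

/-- The Pauli operator `𝒫_D^G = (−1)^{|G[D]|} X_D Z_{Odd_G(D)}`. -/
def pauliP (G : SimpleGraph V) (D : Finset V) (ψ : (V → Bool) → ℂ) : (V → Bool) → ℂ :=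
  fun x => (-1 : ℂ) ^ edgeCount G D * Xop D (Zop (oddNbhd G D) ψ) x

/-- Index of a Bool in `Fin 2`. -/
def boolIdx (b : Bool) : Fin 2 := if b then 1 else 0

/-- Action of a local (tensor-product) operator `⊗_u U_u` on the state space. -/
def applyLocal (U : V → Matrix (Fin 2) (Fin 2) ℂ) (ψ : (V → Bool) → ℂ) : (V → Bool) → ℂ :=
  fun x => ∑ y : V → Bool, (∏ u, U u (boolIdx (x u)) (boolIdx (y u))) * ψ y

/-- A local unitary: each single-qubit factor is unitary. -/
def IsLocalUnitary (U : V → Matrix (Fin 2) (Fin 2) ℂ) : Prop :=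
  ∀ u, U u ∈ Matrix.unitaryGroup (Fin 2) ℂ

def Xgate : Matrix (Fin 2) (Fin 2) ℂ := !![0, 1; 1, 0]

def Zgate : Matrix (Fin 2) (Fin 2) ℂ := !![1, 0; 0, -1]

def Ygate : Matrix (Fin 2) (Fin 2) ℂ := Complex.I • (Xgate * Zgate)

def Hgate : Matrix (Fin 2) (Fin 2) ℂ := (1 / (Real.sqrt 2 : ℂ)) • !![1, 1; 1, -1]

/-- The rotation `Z(α) = diag(1, e^{iα})`. -/
def Zrot (α : ℝ) : Matrix (Fin 2) (Fin 2) ℂ := !![1, 0; 0, Complex.exp (Complex.I * (α : ℂ))]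

/-- The rotation `X(α) = H Z(α) H`. -/
def Xrot (α : ℝ) : Matrix (Fin 2) (Fin 2) ℂ := Hgate * Zrot α * Hgate

/-- A 2×2 matrix is in the Pauli group. -/
def IsPauliGate (M : Matrix (Fin 2) (Fin 2) ℂ) : Prop :=
  ∃ z ∈ ({1, -1, Complex.I, -Complex.I} : Set ℂ),
    ∃ P ∈ ({1, Xgate, Ygate, Zgate} : Set (Matrix (Fin 2) (Fin 2) ℂ)), M = z • P

/-- A 2×2 unitary is Clifford if it maps `X` and `Z` to the Pauli group under conjugation. -/
def IsCliffordGate (C : Matrix (Fin 2) (Fin 2) ℂ) : Prop :=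
  C ∈ Matrix.unitaryGroup (Fin 2) ℂ ∧ IsPauliGate (C * Xgate * Cᴴ) ∧ IsPauliGate (C * Zgate * Cᴴ)

/-- The subgroup `LC_r` of 2×2 unitaries generated by `H` and `Z(π/2^r)`. -/
inductive InLCr (r : ℕ) : Matrix (Fin 2) (Fin 2) ℂ → Prop
  | H : InLCr r Hgate
  | Z : InLCr r (Zrot (π / 2 ^ r))
  | one : InLCr r 1
  | mul {A B : Matrix (Fin 2) (Fin 2) ℂ} : InLCr r A → InLCr r B → InLCr r (A * B)
  | inv {A : Matrix (Fin 2) (Fin 2) ℂ} : InLCr r A → InLCr r A⁻¹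

/-- Two states are LU-equivalent when some local unitary maps one to the other. -/
def LUequiv (ψ φ : (V → Bool) → ℂ) : Prop :=
  ∃ U : V → Matrix (Fin 2) (Fin 2) ℂ, IsLocalUnitary U ∧ φ = applyLocal U ψ

/-- Two states are `LC_r`-equivalent when some local unitary with all factors in `LC_r`
maps one to the other. -/
def LCrEquiv (r : ℕ) (ψ φ : (V → Bool) → ℂ) : Prop :=
  ∃ U : V → Matrix (Fin 2) (Fin 2) ℂ, (∀ u, InLCr r (U u)) ∧ φ = applyLocal U ψ

/-- Local complementation of `G` at a vertex `u`: `v ∼ w` iff `(v ∼_G w) XOR (v, w ∈ N_G(u))`. -/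
def localComp (G : SimpleGraph V) (u : V) : SimpleGraph V where
  Adj v w := v ≠ w ∧ ¬ (G.Adj v w ↔ G.Adj u v ∧ G.Adj u w)
  symm := ⟨by
    intro v w h
    obtain ⟨h1, h2⟩ := h
    refine ⟨h1.symm, fun h => h2 ?_⟩
    rw [G.adj_comm w v] at h
    tauto⟩
  loopless := ⟨fun v h => h.1 rfl⟩

/-- Local equivalence: related by a sequence of local complementations. -/
def LocalEquiv : SimpleGraph V → SimpleGraph V → Prop :=
  Relation.ReflTransGen (fun G G' => ∃ u, G' = localComp G u)

/-- The local Clifford operator `L_u^G = X_u(π/2) ⊗_{v ∈ N_G(u)} Z_v(−π/2)`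
implementing the local complementation at `u`. -/
def Lmat (G : SimpleGraph V) (u : V) : V → Matrix (Fin 2) (Fin 2) ℂ :=
  fun v => if v = u then Xrot (π / 2) else if G.Adj u v then Zrot (-(π / 2)) else 1

/-- The local Clifford operator implementing a sequence of local complementations:
`lcSeqOp G [a₁, …, a_m] = L_{a_m}^{G^{(m−1)}} ⋯ L_{a_1}^{G^{(0)}}` (pointwise products). -/
def lcSeqOp : SimpleGraph V → List V → V → Matrix (Fin 2) (Fin 2) ℂ
  | _, [] => fun _ => 1
  | G, a :: l => fun v => lcSeqOp (localComp G a) l v * Lmat G a v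

/-- The support of a multiset of vertices. -/
def msSupp (S : V → ℕ) : Finset V := Finset.univ.filter (fun u => 0 < S u)

/-- A multiset of vertices is independent in `G` when its support is an independent set. -/
def MsIndep (G : SimpleGraph V) (S : V → ℕ) : Prop :=
  ∀ u v, 0 < S u → 0 < S v → ¬ G.Adj u v

/-- `S • A = Σ_{u ∈ A} S(u)`. -/
def msDot (S : V → ℕ) (A : Finset V) : ℕ := ∑ u ∈ A, S u

/-- The common neighbourhood `Λ_G^K = ⋂_{u ∈ K} N_G(u)`. -/
def commonNbhd (G : SimpleGraph V) (K : Finset V) : Finset V :=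
  Finset.univ.filter (fun v => ∀ u ∈ K, G.Adj u v)

/-- The Kronecker delta `δ(0) = 1`, `δ(k) = 0` for `k > 0`. -/
def kdelta (k : ℕ) : ℕ := if k = 0 then 1 else 0

/-- `S` is `r`-incident in `G`. -/
def RIncident (G : SimpleGraph V) (r : ℕ) (S : V → ℕ) : Prop :=
  ∀ k < r, ∀ K : Finset V, (∀ u ∈ K, u ∉ msSupp S) → K.card = k + 2 →
    2 ^ (r - k - kdelta k) ∣ msDot S (commonNbhd G K)

/-- The `r`-local complementation `G ⋆^r S`. -/
def rLocalComp (G : SimpleGraph V) (r : ℕ) (S : V → ℕ) : SimpleGraph V where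
  Adj u v := u ≠ v ∧
    ¬ (G.Adj u v ↔ msDot S (commonNbhd G {u, v}) ≡ 2 ^ (r - 1) [MOD 2 ^ r])
  symm := ⟨by
    intro u v h
    obtain ⟨h1, h2⟩ := h
    refine ⟨h1.symm, fun h => h2 ?_⟩
    rw [G.adj_comm v u, Finset.pair_comm v u] at h
    exact h⟩
  loopless := ⟨fun u h => h.1 rfl⟩

/-- `G ⋆^r S` is valid when `S` is independent and `r`-incident. -/
def ValidRLC (G : SimpleGraph V) (r : ℕ) (S : V → ℕ) : Prop :=
  MsIndep G S ∧ RIncident G r S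

/-- `r`-local equivalence: related by a sequence of valid `r`-local complementations. -/
def RLocalEquiv (r : ℕ) : SimpleGraph V → SimpleGraph V → Prop :=
  Relation.ReflTransGen (fun G G' => ∃ S : V → ℕ, ValidRLC G r S ∧ G' = rLocalComp G r S)

/-- A local set of `G`: a nonempty set of the form `D ∪ Odd_G(D)`. -/
def IsLocalSet (G : SimpleGraph V) (L : Finset V) : Prop :=
  L.Nonempty ∧ ∃ D : Finset V, L = D ∪ oddNbhd G D

/-- A minimal local set of `G`. -/
def IsMLS (G : SimpleGraph V) (L : Finset V) : Prop :=
  IsLocalSet G L ∧ ∀ L' : Finset V, IsLocalSet G L' → L' ⊆ L → L' = L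

/-- A vertex has type X in `G`. -/
def HasTypeX (G : SimpleGraph V) (u : V) : Prop :=
  (∃ L, IsMLS G L ∧ u ∈ L) ∧
  ∀ L D : Finset V, IsMLS G L → u ∈ L → L = D ∪ oddNbhd G D → u ∈ D ∧ u ∉ oddNbhd G D

/-- A vertex has type Y in `G`. -/
def HasTypeY (G : SimpleGraph V) (u : V) : Prop :=
  (∃ L, IsMLS G L ∧ u ∈ L) ∧
  ∀ L D : Finset V, IsMLS G L → u ∈ L → L = D ∪ oddNbhd G D → u ∈ D ∧ u ∈ oddNbhd G D

/-- A vertex has type Z in `G`. -/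
def HasTypeZ (G : SimpleGraph V) (u : V) : Prop :=
  (∃ L, IsMLS G L ∧ u ∈ L) ∧
  ∀ L D : Finset V, IsMLS G L → u ∈ L → L = D ∪ oddNbhd G D → u ∉ D ∧ u ∈ oddNbhd G D

/-- A vertex has type ⊥ in `G`. -/
def HasTypeBot (G : SimpleGraph V) (u : V) : Prop :=
  ¬ HasTypeX G u ∧ ¬ HasTypeY G u ∧ ¬ HasTypeZ G u

/-- A graph on a linearly ordered vertex set is in standard form. -/
def StandardForm {W : Type} [Fintype W] [LinearOrder W] (G : SimpleGraph W) : Prop :=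
  (∀ u, ¬ HasTypeY G u) ∧
  ∀ u, HasTypeX G u → ∀ v, G.Adj u v → HasTypeZ G v ∧ u < v

/-- The `k`-subsets of `[1, t]`. -/
abbrev KSubsets (t k : ℕ) := {A : Finset (Fin t) // A.card = k}

/-- The vertex set of the graphs `C_{t,k}` and `C'_{t,k}`. -/
abbrev CtkVertex (t k : ℕ) := Fin t ⊕ KSubsets t k

/-- The bipartite graph `C_{t,k}`: `u ∈ [1,t]` is adjacent to a `k`-subset `A` iff `u ∈ A`. -/
def Ctk (t k : ℕ) : SimpleGraph (CtkVertex t k) :=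
  SimpleGraph.fromRel (fun x y =>
    ∃ (u : Fin t) (A : KSubsets t k), x = Sum.inl u ∧ y = Sum.inr A ∧ u ∈ A.1)

/-- The graph `C'_{t,k}`: `C_{t,k}` together with all edges between distinct elements of `[1,t]`. -/
def Ctk' (t k : ℕ) : SimpleGraph (CtkVertex t k) :=
  SimpleGraph.fromRel (fun x y =>
    (∃ (u : Fin t) (A : KSubsets t k), x = Sum.inl u ∧ y = Sum.inr A ∧ u ∈ A.1) ∨
    (∃ u v : Fin t, x = Sum.inl u ∧ y = Sum.inl v))

end

/-!
The count `S • Λ_G^{u,v}` is additive in `S`, and for a valid `S` it is a multiple of `2^(r-1)`: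
it vanishes when `{u, v}` meets the support of `S` (by independence) and is divisible by `2^(r-1)`
otherwise (by `r`-incidence with `k = 0`). On multiples of `2^(r-1)` the condition
`≡ 2^(r-1) [MOD 2^r]` is oddness of the quotient, so `S₁ ⊔ S₂` flips exactly the pairs flipped by
one of `S₁`, `S₂`. Independence of `S₁ ⊔ S₂` means that `⋆^r S₁` changes no edge at a vertex
of the support of `S₂`, so `S₂` sees the same common neighbourhood counts in `G` and in `G ⋆^r S₁`.
-/

lemma msDot_add {V : Type} (S₁ S₂ : V → ℕ) (A : Finset V) :
    msDot (fun u => S₁ u + S₂ u) A = msDot S₁ A + msDot S₂ A :=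
  Finset.sum_add_distrib

lemma mem_msSupp {V : Type} [Fintype V] {S : V → ℕ} {u : V} : u ∈ msSupp S ↔ 0 < S u := by
  simp [msSupp]

section

variable {V : Type} [Fintype V] [DecidableEq V] {G : SimpleGraph V} {r : ℕ} {S S₁ S₂ T : V → ℕ}

lemma msDot_commonNbhd_eq_zero {K : Finset V} {x : V} (hx : x ∈ K)
    (h : ∀ w, 0 < S w → ¬ G.Adj x w) : msDot S (commonNbhd G K) = 0 := by
  refine Finset.sum_eq_zero fun w hw => ?_
  by_contra hw0
  exact h w (Nat.pos_of_ne_zero hw0) ((Finset.mem_filter.1 hw).2 x hx)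

lemma RIncident.add (h₁ : RIncident G r S₁) (h₂ : RIncident G r S₂) :
    RIncident G r (fun u => S₁ u + S₂ u) := by
  intro k hk K hK hcard
  have hK₁ : ∀ u ∈ K, u ∉ msSupp S₁ := fun u hu h =>
    hK u hu (mem_msSupp.2 (Nat.lt_add_right _ (mem_msSupp.1 h)))
  have hK₂ : ∀ u ∈ K, u ∉ msSupp S₂ := fun u hu h =>
    hK u hu (mem_msSupp.2 (Nat.lt_add_left _ (mem_msSupp.1 h)))
  rw [msDot_add]
  exact dvd_add (h₁ k hk K hK₁ hcard) (h₂ k hk K hK₂ hcard)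

lemma ValidRLC.two_pow_dvd_msDot_pair (h : ValidRLC G r S) {u v : V} (huv : u ≠ v) :
    2 ^ (r - 1) ∣ msDot S (commonNbhd G {u, v}) := by
  by_cases hmeet : ∃ x ∈ ({u, v} : Finset V), 0 < S x
  · obtain ⟨x, hx, hSx⟩ := hmeet
    rw [msDot_commonNbhd_eq_zero hx fun w hSw => h.1 x w hSx hSw]
    exact dvd_zero _
  rcases Nat.eq_zero_or_pos r with rfl | hr
  · exact one_dvd _
  push Not at hmeet
  have hdisj : ∀ x ∈ ({u, v} : Finset V), x ∉ msSupp S := fun x hx => by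
    simpa [mem_msSupp] using hmeet x hx
  simpa [kdelta] using h.2 0 hr {u, v} hdisj (Finset.card_pair huv)

lemma add_modEq_iff_not_iff {n a b : ℕ} (hn : n ≠ 0) (ha : n ∣ a) (hb : n ∣ b) :
    a + b ≡ n [MOD n * 2] ↔ ¬ (a ≡ n [MOD n * 2] ↔ b ≡ n [MOD n * 2]) := by
  obtain ⟨a, rfl⟩ := ha
  obtain ⟨b, rfl⟩ := hb
  have hodd : ∀ c, n * c ≡ n [MOD n * 2] ↔ c % 2 = 1 := fun c => by
    have := Nat.ModEq.mul_left_cancel_iff' (a := c) (b := 1) (m := 2) hn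
    rwa [mul_one] at this
  rw [← mul_add, hodd, hodd, hodd]
  omega

lemma not_zero_modEq_two_pow_pred (hr : 0 < r) : ¬ 0 ≡ 2 ^ (r - 1) [MOD 2 ^ r] := by
  have hlt : 2 ^ (r - 1) < 2 ^ r := Nat.pow_lt_pow_right (by norm_num) (by omega)
  unfold Nat.ModEq
  rw [Nat.zero_mod, Nat.mod_eq_of_lt hlt]
  positivity

lemma rLocalComp_adj_iff_of_forall_not_adj (hr : 0 < r) {u v : V}
    (hv : ∀ w, 0 < S w → ¬ G.Adj v w) :
    (rLocalComp G r S).Adj u v ↔ G.Adj u v := by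
  change u ≠ v ∧ ¬ (G.Adj u v ↔ msDot S (commonNbhd G {u, v}) ≡ 2 ^ (r - 1) [MOD 2 ^ r]) ↔ _
  rw [msDot_commonNbhd_eq_zero (by simp) hv]
  have := not_zero_modEq_two_pow_pred hr
  exact ⟨fun h => by tauto, fun h => ⟨G.ne_of_adj h, by tauto⟩⟩

lemma msDot_commonNbhd_rLocalComp (hr : 0 < r)
    (hTS : ∀ v w, 0 < T v → 0 < S w → ¬ G.Adj v w) (K : Finset V) :
    msDot T (commonNbhd (rLocalComp G r S) K) = msDot T (commonNbhd G K) := by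
  simp only [msDot, commonNbhd, Finset.sum_filter]
  refine Finset.sum_congr rfl fun w _ => ?_
  rcases Nat.eq_zero_or_pos (T w) with hw | hw
  · simp [hw]
  · simp only [rLocalComp_adj_iff_of_forall_not_adj hr (hTS w · hw)]

lemma RIncident.rLocalComp (hr : 0 < r) (hTS : ∀ v w, 0 < T v → 0 < S w → ¬ G.Adj v w)
    (hT : RIncident G r T) : RIncident (rLocalComp G r S) r T := by
  intro k hk K hK hcard
  rw [msDot_commonNbhd_rLocalComp hr hTS]
  exact hT k hk K hK hcard

lemma rLocalComp_add (hr : 0 < r) (h₁ : ValidRLC G r S₁) (h₂ : ValidRLC G r S₂)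
    (h₂₁ : ∀ v w, 0 < S₂ v → 0 < S₁ w → ¬ G.Adj v w) :
    rLocalComp G r (fun u => S₁ u + S₂ u) = rLocalComp (rLocalComp G r S₁) r S₂ := by
  ext u v
  by_cases huv : u = v
  · exact iff_of_false (fun h => h.1 huv) (fun h => h.1 huv)
  have hxor : msDot S₁ (commonNbhd G {u, v}) + msDot S₂ (commonNbhd G {u, v})
        ≡ 2 ^ (r - 1) [MOD 2 ^ r] ↔
      ¬ (msDot S₁ (commonNbhd G {u, v}) ≡ 2 ^ (r - 1) [MOD 2 ^ r] ↔
        msDot S₂ (commonNbhd G {u, v}) ≡ 2 ^ (r - 1) [MOD 2 ^ r]) := by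
    rw [← Nat.two_pow_pred_mul_two hr]
    exact add_modEq_iff_not_iff (by positivity) (h₁.two_pow_dvd_msDot_pair huv)
      (h₂.two_pow_dvd_msDot_pair huv)
  change u ≠ v ∧ ¬ (G.Adj u v ↔ _) ↔
    u ≠ v ∧ ¬ ((u ≠ v ∧ ¬ (G.Adj u v ↔ _)) ↔
      msDot S₂ (commonNbhd (rLocalComp G r S₁) {u, v}) ≡ 2 ^ (r - 1) [MOD 2 ^ r])
  rw [msDot_add, hxor, msDot_commonNbhd_rLocalComp hr h₂₁]
  tauto

end

theorem stmt_4 {V : Type} [Fintype V] [DecidableEq V] (G : SimpleGraph V) (r : ℕ) (hr : 0 < r)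
    (S₁ S₂ : V → ℕ) (h₁ : ValidRLC G r S₁) (h₂ : ValidRLC G r S₂)
    (hindep : MsIndep G (fun u => S₁ u + S₂ u)) :
    RIncident G r (fun u => S₁ u + S₂ u) ∧
    RIncident (rLocalComp G r S₁) r S₂ ∧
    rLocalComp G r (fun u => S₁ u + S₂ u) = rLocalComp (rLocalComp G r S₁) r S₂ := by
  have h₂₁ : ∀ v w, 0 < S₂ v → 0 < S₁ w → ¬ G.Adj v w := fun v w hv hw =>
    hindep v w (Nat.lt_add_left _ hv) (Nat.lt_add_right _ hw)
  exact ⟨h₁.2.add h₂.2, h₂.2.rLocalComp hr h₂₁, rLocalComp_add hr h₁ h₂ h₂₁⟩
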